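/- The cubic fourfold Y ⊂ P⁵ defined by S₀S₁S₂ = Φ(T₀,T₁,T₂), where Φ defines a nonsingular plane cubic, has singular locus exactly the three points p₀, p₁, p₂ where pᵢ is the coordinate point with only the Sᵢ-coordinate nonzero; at each pᵢ the local equation is of the form s₁s₂ = Φ(t₀,t₁,t₂), a simple elliptic singularity of type Ẽ₆. -/

import Mathlib

/-!
Since `∂F/∂Sᵢ` is the product of the other two `S`-coordinates, at a singular point at most one
`Sᵢ` is nonzero; since `∂F/∂Tₖ = -∂Φ/∂Tₖ`, nonsingularity of the cubic forces `T = 0`. Conversely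
the partials of `Φ` are quadratic forms, so they vanish at `T = 0`, and every point with only one
nonzero coordinate `Sᵢ` is singular.
-/

open MvPolynomial

/-- The embedding of the T-variables into the six coordinates. -/
def tVar (i : Fin 3) : Fin 6 := ⟨(i : ℕ) + 3, by omega⟩

/-- The embedding of the S-variables into the six coordinates. -/
def sVar (i : Fin 3) : Fin 6 := ⟨(i : ℕ), by omega⟩

/-- The equation F = S₀S₁S₂ − Φ(T₀,T₁,T₂) of the cubic fourfold Y. -/
noncomputable def Feq (Φ : MvPolynomial (Fin 3) ℂ) : MvPolynomial (Fin 6) ℂ :=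
  X (sVar 0) * X (sVar 1) * X (sVar 2) - rename tVar Φ

namespace MvPolynomial

lemma IsHomogeneous.eval_zero_pderiv {σ R : Type*} [CommSemiring R] {φ : MvPolynomial σ R}
    {n : ℕ} (hφ : φ.IsHomogeneous n) (hn : 2 ≤ n) (i : σ) :
    eval 0 (pderiv i φ) = 0 := by
  rw [eval_zero, constantCoeff_eq]
  exact hφ.pderiv.coeff_eq_zero (by simp; omega)

lemma IsHomogeneous.forall_eval_pderiv_eq_zero_iff {σ R : Type*} [CommSemiring R]
    {φ : MvPolynomial σ R} {n : ℕ} (hφ : φ.IsHomogeneous n) (hn : 2 ≤ n)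
    (hsm : ∀ t : σ → R, (∀ i, eval t (pderiv i φ) = 0) → t = 0) (t : σ → R) :
    (∀ i, eval t (pderiv i φ) = 0) ↔ t = 0 :=
  ⟨hsm t, by rintro rfl; exact hφ.eval_zero_pderiv hn⟩

end MvPolynomial

lemma sVar_injective : Function.Injective sVar := by
  intro a b h; simpa [sVar, Fin.ext_iff] using h

lemma tVar_injective : Function.Injective tVar := by
  intro a b h; simpa [tVar, Fin.ext_iff] using h

lemma tVar_ne_sVar (k i : Fin 3) : tVar k ≠ sVar i := by
  simp [sVar, tVar, Fin.ext_iff]; omega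

lemma forall_fin_six_iff {P : Fin 6 → Prop} :
    (∀ j, P j) ↔ (∀ i, P (sVar i)) ∧ ∀ k, P (tVar k) := by
  refine ⟨fun h => ⟨fun i => h _, fun k => h _⟩, fun ⟨hS, hT⟩ j => ?_⟩
  fin_cases j
  exacts [hS 0, hS 1, hS 2, hT 0, hT 1, hT 2]

lemma pderiv_sVar_rename_tVar {R : Type*} [CommSemiring R] (p : MvPolynomial (Fin 3) R)
    (i : Fin 3) :
    pderiv (sVar i) (rename tVar p) = 0 := by
  apply pderiv_eq_zero_of_notMem_vars
  intro hmem
  obtain ⟨k, -, hk⟩ := Finset.mem_image.mp (vars_rename _ _ hmem)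
  exact tVar_ne_sVar k i hk

lemma pderiv_sVar_Feq (Φ : MvPolynomial (Fin 3) ℂ) :
    pderiv (sVar 0) (Feq Φ) = X (sVar 1) * X (sVar 2) ∧
    pderiv (sVar 1) (Feq Φ) = X (sVar 0) * X (sVar 2) ∧
    pderiv (sVar 2) (Feq Φ) = X (sVar 0) * X (sVar 1) := by
  simp only [Feq, map_sub, pderiv_sVar_rename_tVar, sub_zero]
  refine ⟨?_, ?_, ?_⟩ <;> simp [pderiv_X, sVar, mul_comm]

lemma pderiv_tVar_Feq (Φ : MvPolynomial (Fin 3) ℂ) (k : Fin 3) :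
    pderiv (tVar k) (Feq Φ) = - rename tVar (pderiv k Φ) := by
  simp [Feq, pderiv_rename tVar_injective, pderiv_X, tVar_ne_sVar]

lemma exists_ne_zero_and_pairwise_mul_eq_zero_iff {ι K : Type*} [MulZeroClass K]
    [NoZeroDivisors K] (s : ι → K) :
    ((∃ i, s i ≠ 0) ∧ ∀ i j, i ≠ j → s i * s j = 0) ↔ ∃ i, s i ≠ 0 ∧ ∀ j ≠ i, s j = 0 := by
  constructor
  · rintro ⟨⟨i, hi⟩, hmul⟩
    exact ⟨i, hi, fun j hji => (mul_eq_zero.mp (hmul i j hji.symm)).resolve_left hi⟩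
  · rintro ⟨i, hi, hzero⟩
    refine ⟨⟨i, hi⟩, fun j k hjk => ?_⟩
    rcases eq_or_ne j i with rfl | hji
    · rw [hzero k hjk.symm, mul_zero]
    · rw [hzero j hji, zero_mul]

lemma pairwise_mul_eq_zero_fin_three_iff {K : Type*} [CommMonoidWithZero K] (s : Fin 3 → K) :
    (∀ i j, i ≠ j → s i * s j = 0) ↔ s 1 * s 2 = 0 ∧ s 0 * s 2 = 0 ∧ s 0 * s 1 = 0 := by
  refine ⟨fun h => ⟨h 1 2 (by decide), h 0 2 (by decide), h 0 1 (by decide)⟩, ?_⟩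
  rintro ⟨h12, h02, h01⟩ i j hij
  fin_cases i <;> fin_cases j <;> first | exact (hij rfl).elim | assumption | rwa [mul_comm]

lemma forall_eval_pderiv_Feq_eq_zero_iff {Φ : MvPolynomial (Fin 3) ℂ} (hΦ : Φ.IsHomogeneous 3)
    (hsm : ∀ t : Fin 3 → ℂ, (∀ i : Fin 3, eval t (pderiv i Φ) = 0) → t = 0) (x : Fin 6 → ℂ) :
    (∀ j, eval x (pderiv j (Feq Φ)) = 0) ↔
      (∀ i j, i ≠ j → x (sVar i) * x (sVar j) = 0) ∧ ∀ k, x (tVar k) = 0 := by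
  rw [forall_fin_six_iff]
  apply and_congr
  · refine Iff.trans ?_ (pairwise_mul_eq_zero_fin_three_iff (x ∘ sVar)).symm
    obtain ⟨h0, h1, h2⟩ := pderiv_sVar_Feq Φ
    simp [Fin.forall_fin_succ, h0, h1, h2]
  · simp only [pderiv_tVar_Feq, map_neg, eval_rename, neg_eq_zero]
    rw [hΦ.forall_eval_pderiv_eq_zero_iff (by norm_num) hsm, _root_.funext_iff]
    rfl

lemma exists_sVar_ne_zero_iff {K : Type*} [MulZeroClass K] [NoZeroDivisors K] (x : Fin 6 → K) :
    (∃ i, x (sVar i) ≠ 0 ∧ ∀ j ≠ sVar i, x j = 0) ↔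
      x ≠ 0 ∧ (∀ i j, i ≠ j → x (sVar i) * x (sVar j) = 0) ∧ ∀ k, x (tVar k) = 0 := by
  have hne (hT : ∀ k, x (tVar k) = 0) : x ≠ 0 ↔ ∃ i, x (sVar i) ≠ 0 := by
    simp only [Ne, _root_.funext_iff, Pi.zero_apply, forall_fin_six_iff (P := fun j => x j = 0),
      hT, implies_true, and_true, not_forall]
  simp only [forall_fin_six_iff (P := fun j => j ≠ _ → x j = 0), sVar_injective.ne_iff,
    tVar_ne_sVar, ne_eq, not_false_eq_true, forall_const]
  have key := exists_ne_zero_and_pairwise_mul_eq_zero_iff (fun i => x (sVar i))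
  constructor
  · rintro ⟨i, hi, hS, hT⟩
    exact ⟨(hne hT).2 ⟨i, hi⟩, (key.2 ⟨i, hi, hS⟩).2, hT⟩
  · rintro ⟨hx, hP, hT⟩
    obtain ⟨i, hi, hS⟩ := key.1 ⟨(hne hT).1 hx, hP⟩
    exact ⟨i, hi, hS, hT⟩

lemma eval_Feq_eq_zero_iff (Φ : MvPolynomial (Fin 3) ℂ) (x : Fin 6 → ℂ) :
    eval x (Feq Φ) = 0 ↔ x (sVar 0) * x (sVar 1) * x (sVar 2) = eval (x ∘ tVar) Φ := by
  simp only [Feq, map_sub, map_mul, eval_X, eval_rename, sub_eq_zero]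

theorem stmt17 (Φ : MvPolynomial (Fin 3) ℂ)
    (hΦ : Φ.IsHomogeneous 3)
    -- Φ defines a nonsingular plane cubic:
    (hsm : ∀ t : Fin 3 → ℂ, (∀ i : Fin 3, eval t (pderiv i Φ) = 0) → t = 0) :
    -- The singular locus of the projective fourfold Y = {F = 0}, i.e. the set of
    -- nonzero x ∈ ℂ⁶ at which all six partial derivatives of F vanish, is
    -- exactly the union of the three punctured coordinate axes through the
    -- points p₀, p₁, p₂ (only the Sᵢ-coordinate nonzero):
    ({x : Fin 6 → ℂ | x ≠ 0 ∧ ∀ j : Fin 6, eval x (pderiv j (Feq Φ)) = 0} =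
      {x : Fin 6 → ℂ | ∃ i : Fin 3, x (sVar i) ≠ 0 ∧
        ∀ j : Fin 6, j ≠ sVar i → x j = 0}) ∧
    -- and in the affine chart S₀ = 1 around p₀ the equation F = 0 reads
    -- s₁s₂ = Φ(t₀,t₁,t₂):
    (∀ s₁ s₂ : ℂ, ∀ t : Fin 3 → ℂ,
      eval (fun j : Fin 6 =>
        if j = sVar 0 then 1 else if j = sVar 1 then s₁ else if j = sVar 2 then s₂
        else t ⟨(j : ℕ) - 3, by omega⟩) (Feq Φ) = 0 ↔ s₁ * s₂ = eval t Φ) := by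
  refine ⟨?_, fun s₁ s₂ t => ?_⟩
  · ext x
    rw [Set.mem_ofPred_eq, Set.mem_ofPred_eq, forall_eval_pderiv_Feq_eq_zero_iff hΦ hsm,
      exists_sVar_ne_zero_iff]
  · have hchart : (fun j : Fin 6 =>
        if j = sVar 0 then 1 else if j = sVar 1 then s₁ else if j = sVar 2 then s₂
        else t ⟨(j : ℕ) - 3, by omega⟩) ∘ tVar = t := by
      funext i
      fin_cases i <;> rfl
    rw [eval_Feq_eq_zero_iff, hchart]
    simp [sVar]
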